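/- Let b : ℝ → ℝ be continuously differentiable and 1-periodic, with b not identically zero and ∫₀¹ b(s) ds = 0. Let η > 0, let λ, k ∈ ℝ, and set r := b²/4 + b'/2 + η. If ψ : ℝ → ℝ is twice continuously differentiable, 1-periodic, positive on ℝ, and satisfies ψ'' + (−b + 2λ)ψ' + (λ² − λ b + r)ψ = k ψ on ℝ, then k > λ² + η. -/

import Mathlib

/-!
Put `p := ψ'/ψ`. Dividing the eigenvalue equation by `ψ` gives a Riccati equation for `p`, which
can be arranged as
`(p + 2λ log ψ + b/2)' = (k - λ² - η) - (p - b/2)² + λ b`.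
The function differentiated on the left is `1`-periodic, so integrating over a period and using
`∫ b = 0` yields `∫₀¹ (p - b/2)² = k - λ² - η`. Hence `k ≥ λ² + η`, and in the equality case
`p = b/2`, which fed back into the Riccati equation forces `b' = 0`; a constant `b` of zero mean
vanishes.
-/

open intervalIntegral

theorem Function.Periodic.deriv {𝕜 F : Type*} [NontriviallyNormedField 𝕜] [NormedAddCommGroup F]
    [NormedSpace 𝕜 F] {f : 𝕜 → F} {c : 𝕜} (hf : Function.Periodic f c) :
    Function.Periodic (_root_.deriv f) c := fun x => by
  rw [← deriv_comp_add_const, show (fun y => f (y + c)) = f from funext hf]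

theorem Function.Periodic.intervalIntegral_eq_zero_of_hasDerivAt {f f' : ℝ → ℝ} {c : ℝ}
    (hf : Function.Periodic f c) (hderiv : ∀ x, HasDerivAt f (f' x) x)
    (hint : IntervalIntegrable f' MeasureTheory.volume 0 c) :
    ∫ x in (0 : ℝ)..c, f' x = 0 := by
  rw [integral_eq_sub_of_hasDerivAt (fun x _ => hderiv x) hint, sub_eq_zero]
  simpa using hf 0

theorem Function.Periodic.eq_zero_of_intervalIntegral_eq_zero {f : ℝ → ℝ} {c : ℝ}
    (hf : Function.Periodic f c) (hc : 0 < c) (hcont : Continuous f) (hnonneg : ∀ x, 0 ≤ f x)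
    (hint : ∫ x in (0 : ℝ)..c, f x = 0) : f = 0 := by
  funext x
  obtain ⟨y, hy, hxy⟩ := hf.exists_mem_Ico₀ hc x
  by_contra hx
  have hpos : 0 < ∫ x in (0 : ℝ)..c, f x :=
    integral_pos hc hcont.continuousOn (fun x _ => hnonneg x)
      ⟨y, Set.Ico_subset_Icc_self hy, hxy ▸ (hnonneg x).lt_of_ne' hx⟩
  exact hpos.ne' hint

theorem eq_zero_of_deriv_eq_zero_of_intervalIntegral_eq_zero {f : ℝ → ℝ} {a c : ℝ} (hac : a ≠ c)
    (hf : Differentiable ℝ f) (hf' : ∀ x, deriv f x = 0) (hint : ∫ x in a..c, f x = 0) :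
    f = 0 := by
  have hconst : f = fun _ => f a := funext fun x => is_const_of_deriv_eq_zero hf hf' x a
  rw [hconst, integral_const, smul_eq_mul, mul_eq_zero] at hint
  rw [hconst]
  funext x
  exact hint.resolve_left (sub_ne_zero.mpr hac.symm)

theorem hasDerivAt_logDeriv {𝕜 : Type*} [NontriviallyNormedField 𝕜] {ψ : 𝕜 → 𝕜} {x : 𝕜}
    (hψ : DifferentiableAt 𝕜 ψ x) (hψ' : DifferentiableAt 𝕜 (deriv ψ) x) (hx : ψ x ≠ 0) :
    HasDerivAt (logDeriv ψ) (deriv (deriv ψ) x / ψ x - logDeriv ψ x ^ 2) x := by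
  refine (hψ'.hasDerivAt.div hψ.hasDerivAt hx).congr_deriv ?_
  rw [logDeriv_apply]
  field_simp

theorem continuous_logDeriv {𝕜 : Type*} [NontriviallyNormedField 𝕜] {ψ : 𝕜 → 𝕜}
    (hψ : ContDiff 𝕜 1 ψ) (hne : ∀ x, ψ x ≠ 0) :
    Continuous (logDeriv ψ) :=
  (hψ.continuous_deriv le_rfl).div hψ.continuous hne

theorem Function.Periodic.logDeriv {𝕜 : Type*} [NontriviallyNormedField 𝕜] {ψ : 𝕜 → 𝕜} {c : 𝕜}
    (hψ : Function.Periodic ψ c) : Function.Periodic (_root_.logDeriv ψ) c := fun x => by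
  simp only [logDeriv_apply, hψ x, hψ.deriv x]

section Eigenfunction

variable {b ψ r : ℝ → ℝ} {η lam k : ℝ}

theorem hasDerivAt_logDeriv_of_eigenfunction (hψ : ContDiff ℝ 2 ψ) (hψne : ∀ x, ψ x ≠ 0)
    (hr : ∀ x, r x = b x ^ 2 / 4 + deriv b x / 2 + η)
    (heq : ∀ x, deriv (deriv ψ) x + (-b x + 2 * lam) * deriv ψ x
      + (lam ^ 2 - lam * b x + r x) * ψ x = k * ψ x) (x : ℝ) :
    HasDerivAt (logDeriv ψ) (k - lam ^ 2 - η - (logDeriv ψ x - b x / 2) ^ 2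
      - 2 * lam * logDeriv ψ x + lam * b x - deriv b x / 2) x := by
  have hψ' : ContDiff ℝ 1 (deriv ψ) := hψ.deriv'
  have hψ'' : deriv (deriv ψ) x = k * ψ x - (-b x + 2 * lam) * deriv ψ x
      - (lam ^ 2 - lam * b x + r x) * ψ x := by linear_combination heq x
  refine (hasDerivAt_logDeriv (hψ.differentiable two_ne_zero x)
    (hψ'.differentiable one_ne_zero x) (hψne x)).congr_deriv ?_
  rw [hψ'', hr x, logDeriv_apply]
  have hx := hψne x
  field_simp
  ring

theorem hasDerivAt_logDeriv_add_log_add_half (hb : Differentiable ℝ b) (hψ : ContDiff ℝ 2 ψ)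
    (hψne : ∀ x, ψ x ≠ 0) (hr : ∀ x, r x = b x ^ 2 / 4 + deriv b x / 2 + η)
    (heq : ∀ x, deriv (deriv ψ) x + (-b x + 2 * lam) * deriv ψ x
      + (lam ^ 2 - lam * b x + r x) * ψ x = k * ψ x) (x : ℝ) :
    HasDerivAt (fun y => logDeriv ψ y + 2 * lam * Real.log (ψ y) + b y / 2)
      (k - lam ^ 2 - η - (logDeriv ψ x - b x / 2) ^ 2 + lam * b x) x := by
  have hlog : HasDerivAt (fun y => Real.log (ψ y)) (logDeriv ψ x) x :=
    ((hψ.differentiable two_ne_zero x).hasDerivAt.log (hψne x))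
  refine (((hasDerivAt_logDeriv_of_eigenfunction hψ hψne hr heq x).add
    (hlog.const_mul (2 * lam))).add ((hb x).hasDerivAt.div_const 2)).congr_deriv ?_
  ring

theorem intervalIntegral_sq_logDeriv_sub_half (hb : Differentiable ℝ b)
    (hbper : Function.Periodic b 1) (hbmean : ∫ x in (0 : ℝ)..1, b x = 0)
    (hψ : ContDiff ℝ 2 ψ) (hψper : Function.Periodic ψ 1) (hψne : ∀ x, ψ x ≠ 0)
    (hr : ∀ x, r x = b x ^ 2 / 4 + deriv b x / 2 + η)
    (heq : ∀ x, deriv (deriv ψ) x + (-b x + 2 * lam) * deriv ψ x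
      + (lam ^ 2 - lam * b x + r x) * ψ x = k * ψ x) :
    ∫ x in (0 : ℝ)..1, (logDeriv ψ x - b x / 2) ^ 2 = k - lam ^ 2 - η := by
  have hp : Continuous (logDeriv ψ) :=
    continuous_logDeriv (hψ.of_le one_le_two) hψne
  have hper : Function.Periodic (fun y => logDeriv ψ y + 2 * lam * Real.log (ψ y) + b y / 2) 1 :=
    fun x => by simp only [hψper.logDeriv x, hψper x, hbper x]
  have hbc : Continuous b := hb.continuous
  have hsq : IntervalIntegrable (fun x => (logDeriv ψ x - b x / 2) ^ 2) MeasureTheory.volume 0 1 :=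
    (by fun_prop : Continuous _).intervalIntegrable 0 1
  have hb1 : IntervalIntegrable b MeasureTheory.volume 0 1 := hbc.intervalIntegrable 0 1
  have h := hper.intervalIntegral_eq_zero_of_hasDerivAt
    (hasDerivAt_logDeriv_add_log_add_half hb hψ hψne hr heq)
    ((intervalIntegrable_const.sub hsq).add (hb1.const_mul lam))
  rw [integral_add (intervalIntegrable_const.sub hsq) (hb1.const_mul lam),
    integral_sub intervalIntegrable_const hsq, integral_const_mul, hbmean] at h
  simp only [integral_const, sub_zero, smul_eq_mul, one_mul, mul_zero, add_zero] at h
  linarith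

theorem deriv_eq_zero_of_logDeriv_eq_half (hb : Differentiable ℝ b) (hψ : ContDiff ℝ 2 ψ)
    (hψne : ∀ x, ψ x ≠ 0) (hr : ∀ x, r x = b x ^ 2 / 4 + deriv b x / 2 + η)
    (heq : ∀ x, deriv (deriv ψ) x + (-b x + 2 * lam) * deriv ψ x
      + (lam ^ 2 - lam * b x + r x) * ψ x = k * ψ x)
    (hk : k = lam ^ 2 + η) (hp : ∀ x, logDeriv ψ x = b x / 2) (x : ℝ) : deriv b x = 0 := by
  have hriccati := hasDerivAt_logDeriv_of_eigenfunction hψ hψne hr heq x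
  have hhalf : HasDerivAt (logDeriv ψ) (deriv b x / 2) x := by
    rw [funext hp]
    exact (hb x).hasDerivAt.div_const 2
  have h := hriccati.unique hhalf
  rw [hp x, hk] at h
  linarith

end Eigenfunction

theorem stmt12_general (b : ℝ → ℝ) (η lam k : ℝ)
    (hb : ContDiff ℝ 1 b) (hbper : Function.Periodic b 1)
    (hbne : b ≠ 0) (hbmean : (∫ s in (0:ℝ)..1, b s) = 0)
    (r : ℝ → ℝ) (hr : r = fun x => (b x) ^ 2 / 4 + deriv b x / 2 + η)
    (ψ : ℝ → ℝ) (hψ : ContDiff ℝ 2 ψ) (hψper : Function.Periodic ψ 1)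
    (hψpos : ∀ x, 0 < ψ x)
    (heq : ∀ x : ℝ,
      deriv (deriv ψ) x + (-b x + 2 * lam) * deriv ψ x
        + (lam ^ 2 - lam * b x + r x) * ψ x = k * ψ x) :
    lam ^ 2 + η < k := by
  have hbd : Differentiable ℝ b := hb.differentiable one_ne_zero
  have hψne : ∀ x, ψ x ≠ 0 := fun x => (hψpos x).ne'
  have hr' : ∀ x, r x = b x ^ 2 / 4 + deriv b x / 2 + η := fun x => congrFun hr x
  have hint := intervalIntegral_sq_logDeriv_sub_half hbd hbper hbmean hψ hψper hψne hr' heq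
  by_contra! hk
  have hzero : ∫ x in (0 : ℝ)..1, (logDeriv ψ x - b x / 2) ^ 2 = 0 :=
    le_antisymm (by linarith) (integral_nonneg zero_le_one fun _ _ => sq_nonneg _)
  have hsq : (fun x => (logDeriv ψ x - b x / 2) ^ 2) = 0 := by
    have hp := continuous_logDeriv (hψ.of_le one_le_two) hψne
    have hbc := hbd.continuous
    exact Function.Periodic.eq_zero_of_intervalIntegral_eq_zero
      (fun x => by simp only [hψper.logDeriv x, hbper x]) one_pos (by fun_prop)
      (fun _ => sq_nonneg _) hzero
  have hp : ∀ x, logDeriv ψ x = b x / 2 := fun x => by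
    simpa [sub_eq_zero] using congrFun hsq x
  exact hbne (eq_zero_of_deriv_eq_zero_of_intervalIntegral_eq_zero zero_ne_one hbd
    (deriv_eq_zero_of_logDeriv_eq_half hbd hψ hψne hr' heq (by linarith) hp) hbmean)

/-- with `r := b²/4 + b'/2 + η` and `b ≢ 0` of zero mean, the principal
periodic eigenvalue of `𝓛_λ[r;-b]`, associated with a positive `1`-periodic eigenfunction
`ψ`, is strictly larger than `λ² + η`. -/
theorem stmt12 (b : ℝ → ℝ) (η lam k : ℝ)
    (hb : ContDiff ℝ 1 b) (hbper : Function.Periodic b 1)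
    (hbne : b ≠ 0) (hbmean : (∫ s in (0:ℝ)..1, b s) = 0) (hη : 0 < η)
    (r : ℝ → ℝ) (hr : r = fun x => (b x) ^ 2 / 4 + deriv b x / 2 + η)
    (ψ : ℝ → ℝ) (hψ : ContDiff ℝ 2 ψ) (hψper : Function.Periodic ψ 1)
    (hψpos : ∀ x, 0 < ψ x)
    (heq : ∀ x : ℝ,
      deriv (deriv ψ) x + (-b x + 2 * lam) * deriv ψ x
        + (lam ^ 2 - lam * b x + r x) * ψ x = k * ψ x) :
    lam ^ 2 + η < k :=
  stmt12_general b η lam k hb hbper hbne hbmean r hr ψ hψ hψper hψpos heq
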